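/- arXiv:1110.0400 — 4 statements merged into one kernel-verified Lean document; each statement's English description precedes it below -/
import Mathlib

section
/- Let V be a Hausdorff locally convex real topological vector space and let K be a nonempty compact convex subset of V. Then every continuous affine map T : K → K (i.e. T(λx+(1−λ)y) = λT(x)+(1−λ)T(y) for all x, y ∈ K and λ ∈ [0,1]) has a fixed point, i.e. there exists p ∈ K with T(p) = p. -/
/-!
Averaging the orbit `x, T x, T² x, …` gives the Cesàro means `aₙ = (n+1)⁻¹ ∑_{k ≤ n} Tᵏ x`,
which lie in `K` by convexity. Since `T` is affine, `T aₙ - aₙ = (n+1)⁻¹ (Tⁿ⁺¹ x - x)`, and this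
tends to `0` because `K - K` is bounded. Any cluster point of `(aₙ)` in the compact set `K` is
then a fixed point of `T`.
-/

open Filter Topology

/-- `T` is affine on `K`: it preserves convex combinations of points of `K`. -/
def IsAffineOn {V : Type*} [AddCommGroup V] [Module ℝ V] (T : V → V) (K : Set V) : Prop :=
  ∀ x ∈ K, ∀ y ∈ K, ∀ t : ℝ, 0 ≤ t → t ≤ 1 →
    T (t • x + (1 - t) • y) = t • T x + (1 - t) • T y

section CesaroMean

variable {V : Type*} [AddCommGroup V] [Module ℝ V]

noncomputable def cesaroMean (u : ℕ → V) (n : ℕ) : V :=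
  ((n : ℝ) + 1)⁻¹ • ∑ k ∈ Finset.range (n + 1), u k

@[simp]
lemma cesaroMean_zero (u : ℕ → V) : cesaroMean u 0 = u 0 := by
  simp [cesaroMean]

lemma cesaroMean_succ (u : ℕ → V) (n : ℕ) :
    cesaroMean u (n + 1) =
      ((n : ℝ) + 2)⁻¹ • u (n + 1) + (1 - ((n : ℝ) + 2)⁻¹) • cesaroMean u n := by
  have hweight : (1 - ((n : ℝ) + 2)⁻¹) * ((n : ℝ) + 1)⁻¹ = ((n : ℝ) + 2)⁻¹ := by
    field_simp
    ring
  have hcast : ((n + 1 : ℕ) : ℝ) + 1 = (n : ℝ) + 2 := by push_cast; ring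
  rw [cesaroMean, cesaroMean, hcast, Finset.sum_range_succ, smul_add, smul_smul, hweight, add_comm]

lemma Convex.cesaroMean_mem {K : Set V} (hK : Convex ℝ K) {u : ℕ → V} (hu : ∀ k, u k ∈ K)
    (n : ℕ) : cesaroMean u n ∈ K := by
  rw [cesaroMean, Finset.smul_sum]
  refine hK.sum_mem (fun _ _ => by positivity) ?_ fun k _ => hu k
  simp only [Finset.sum_const, Finset.card_range, nsmul_eq_mul]
  push_cast
  field_simp

lemma IsAffineOn.map_cesaroMean {T : V → V} {K : Set V} (hT : IsAffineOn T K)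
    (hK : Convex ℝ K) {u : ℕ → V} (hu : ∀ k, u k ∈ K) (n : ℕ) :
    T (cesaroMean u n) = cesaroMean (T ∘ u) n := by
  induction n with
  | zero => simp
  | succ n ih =>
    have hw₀ : (0 : ℝ) ≤ ((n : ℝ) + 2)⁻¹ := by positivity
    have hw₁ : ((n : ℝ) + 2)⁻¹ ≤ 1 := inv_le_one_of_one_le₀ (by linarith [n.cast_nonneg (α := ℝ)])
    rw [cesaroMean_succ, cesaroMean_succ,
      hT _ (hu _) _ (hK.cesaroMean_mem hu n) _ hw₀ hw₁, ih, Function.comp_apply]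

lemma cesaroMean_shift_sub (u : ℕ → V) (n : ℕ) :
    cesaroMean (fun k => u (k + 1)) n - cesaroMean u n = ((n : ℝ) + 1)⁻¹ • (u (n + 1) - u 0) := by
  rw [cesaroMean, cesaroMean, ← smul_sub, ← Finset.sum_sub_distrib, Finset.sum_range_sub]

lemma tendsto_cesaroMean_shift_sub [TopologicalSpace V] [IsTopologicalAddGroup V]
    {S : Set V} (hS : Bornology.IsVonNBounded ℝ S) {u : ℕ → V}
    (hu : ∀ k, u k ∈ S) :
    Tendsto (fun n => cesaroMean (fun k => u (k + 1)) n - cesaroMean u n) atTop (𝓝 0) := by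
  simp only [cesaroMean_shift_sub]
  refine (hS.sub hS).smul_tendsto_zero (.of_forall fun n => Set.sub_mem_sub (hu _) (hu 0)) ?_
  simpa [one_div] using tendsto_one_div_add_atTop_nhds_zero_nat (𝕜 := ℝ)

end CesaroMean

lemma IsCompact.exists_fixed_point_of_tendsto_sub_zero {G ι : Type*} [AddGroup G] [TopologicalSpace G]
    [IsTopologicalAddGroup G] [T2Space G] {K : Set G} (hK : IsCompact K) {T : G → G}
    (hT : ContinuousOn T K) {l : Filter ι} [l.NeBot] {a : ι → G} (ha : ∀ i, a i ∈ K)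
    (hlim : Tendsto (fun i => T (a i) - a i) l (𝓝 0)) : ∃ p ∈ K, T p = p := by
  have hmapK : map a l ≤ 𝓟 K := tendsto_principal.2 (.of_forall ha)
  obtain ⟨p, hpK, hp⟩ := hK.exists_mapClusterPt hmapK
  have hdefect : MapClusterPt (T p - p) l (fun i => T (a i) - a i) :=
    hp.tendsto_comp' (((hT.sub continuousOn_id) p hpK).tendsto.mono_left (inf_le_inf_left _ hmapK))
  exact ⟨p, hpK, sub_eq_zero.1 (eq_of_nhds_neBot (hdefect.clusterPt.mono hlim))⟩

theorem fixed_point_of_continuous_affine_selfmap_general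
    {V : Type*} [AddCommGroup V] [Module ℝ V] [TopologicalSpace V]
    [IsTopologicalAddGroup V] [ContinuousSMul ℝ V] [T2Space V]
    (K : Set V) (hne : K.Nonempty) (hcomp : IsCompact K) (hconv : Convex ℝ K)
    (T : V → V) (hmaps : Set.MapsTo T K K) (hcont : ContinuousOn T K)
    (haff : IsAffineOn T K) :
    ∃ p ∈ K, T p = p := by
  obtain ⟨x, hx⟩ := hne
  set u : ℕ → V := fun k => T^[k] x
  have hu : ∀ k, u k ∈ K := fun k => hmaps.iterate k hx
  have hTu : T ∘ u = fun k => u (k + 1) := funext fun k => (Function.iterate_succ_apply' T k x).symm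
  refine hcomp.exists_fixed_point_of_tendsto_sub_zero hcont (l := atTop) (hconv.cesaroMean_mem hu) ?_
  simpa only [haff.map_cesaroMean hconv hu, hTu] using
    tendsto_cesaroMean_shift_sub (hcomp.isVonNBounded ℝ) hu

/-- Every continuous affine self-map of a nonempty compact convex subset of a
Hausdorff locally convex real topological vector space has a fixed point. -/
theorem fixed_point_of_continuous_affine_selfmap
    {V : Type*} [AddCommGroup V] [Module ℝ V] [TopologicalSpace V]
    [IsTopologicalAddGroup V] [ContinuousSMul ℝ V] [T2Space V] [LocallyConvexSpace ℝ V]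
    (K : Set V) (hne : K.Nonempty) (hcomp : IsCompact K) (hconv : Convex ℝ K)
    (T : V → V) (hmaps : Set.MapsTo T K K) (hcont : ContinuousOn T K)
    (haff : IsAffineOn T K) :
    ∃ p ∈ K, T p = p :=
  fixed_point_of_continuous_affine_selfmap_general K hne hcomp hconv T hmaps hcont haff
end

section
/- Let V be a Hausdorff locally convex real topological vector space and let K be a nonempty compact convex subset of V whose affine span is finite-dimensional. Then the group Γ(K) of all affine homeomorphisms of K onto K has a common fixed point: there exists p ∈ K such that T(p) = p for every affine homeomorphism T : K → K. -/
/-- `T` is an affine homeomorphism of `K` onto `K`: a continuous affine self-map of `K`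
with a continuous inverse on `K`. -/
def IsAffineHomeoOf {V : Type*} [AddCommGroup V] [Module ℝ V] [TopologicalSpace V]
    (T : V → V) (K : Set V) : Prop :=
  Set.MapsTo T K K ∧ ContinuousOn T K ∧ IsAffineOn T K ∧
    ∃ S : V → V, Set.MapsTo S K K ∧ ContinuousOn S K ∧
      (∀ p ∈ K, S (T p) = p) ∧ (∀ p ∈ K, T (S p) = p)

open Filter Topology Set MeasureTheory Function

section AffineExtension

variable {E : Type*} [AddCommGroup E] [Module ℝ E] {K : Set E} {T : E → E} {q : E}

theorem IsAffineOn.sub_eq_smul_sub_of_le (hT : IsAffineOn T K) (hq : q ∈ K) {v : E} {a b : ℝ}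
    (ha : 0 < a) (hab : a ≤ b) (hb : q + b • v ∈ K) :
    T (q + a • v) - T q = (a / b) • (T (q + b • v) - T q) := by
  have hb0 : 0 < b := ha.trans_le hab
  have hcomb : (a / b) • (q + b • v) + (1 - a / b) • q = q + a • v := by
    rw [smul_add, smul_smul, div_mul_cancel₀ a hb0.ne']
    module
  rw [← hcomb, hT _ hb _ hq _ (div_pos ha hb0).le ((div_le_one hb0).2 hab)]
  module

theorem IsAffineOn.inv_smul_sub_eq (hT : IsAffineOn T K) (hq : q ∈ K) {v : E} {a b : ℝ}
    (ha : 0 < a) (hb : 0 < b) (ha' : q + a • v ∈ K) (hb' : q + b • v ∈ K) :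
    a⁻¹ • (T (q + a • v) - T q) = b⁻¹ • (T (q + b • v) - T q) := by
  wlog hab : a ≤ b generalizing a b
  · exact (this hb ha hb' ha' (le_of_not_ge hab)).symm
  rw [hT.sub_eq_smul_sub_of_le hq ha hab hb', smul_smul, div_eq_mul_inv, ← mul_assoc,
    inv_mul_cancel₀ ha.ne', one_mul]

variable [TopologicalSpace E] [ContinuousAdd E] [ContinuousSMul ℝ E]

theorem eventually_add_smul_mem (hK : K ∈ 𝓝 q) (v : E) :
    ∀ᶠ c in 𝓝[>] (0 : ℝ), q + c • v ∈ K := by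
  have : Tendsto (fun c : ℝ => q + c • v) (𝓝 0) (𝓝 q) :=
    (continuous_const.add (continuous_id.smul continuous_const)).tendsto' _ _ (by simp)
  exact nhdsWithin_le_nhds (this.eventually hK)

theorem IsAffineOn.exists_add_smul_eq (hT : IsAffineOn T K) (hK : K ∈ 𝓝 q) :
    ∃ L : E → E, ∀ v (c : ℝ), 0 < c → q + c • v ∈ K → T (q + c • v) = T q + c • L v := by
  choose c hc using fun v => (eventually_mem_nhdsWithin.and (eventually_add_smul_mem hK v)).exists
  refine ⟨fun v => (c v)⁻¹ • (T (q + c v • v) - T q), fun v a ha hav => ?_⟩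
  beta_reduce
  rw [← hT.inv_smul_sub_eq (mem_of_mem_nhds hK) ha (hc v).1 hav (hc v).2, smul_inv_smul₀ ha.ne']
  abel

theorem IsAffineOn.isLinearMap_of_add_smul_eq (hT : IsAffineOn T K) (hK : K ∈ 𝓝 q) {L : E → E}
    (hL : ∀ v (c : ℝ), 0 < c → q + c • v ∈ K → T (q + c • v) = T q + c • L v) :
    IsLinearMap ℝ L := by
  have hq : q ∈ K := mem_of_mem_nhds hK
  have map_zero : L 0 = 0 := by
    simpa using hL 0 1 one_pos (by simpa using hq)
  have map_add : ∀ v w, L (v + w) = L v + L w := by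
    intro v w
    obtain ⟨ε, hε : 0 < ε, hv, hw, hvw⟩ := (eventually_mem_nhdsWithin.and
      ((eventually_add_smul_mem hK ((2 : ℝ) • v)).and
      ((eventually_add_smul_mem hK ((2 : ℝ) • w)).and (eventually_add_smul_mem hK (v + w))))).exists
    rw [smul_smul] at hv hw
    have h := hT _ hv _ hw (1 / 2) (by norm_num) (by norm_num)
    have hmid : (1 / 2 : ℝ) • (q + (ε * 2) • v) + (1 - 1 / 2 : ℝ) • (q + (ε * 2) • w) =
        q + ε • (v + w) := by
      module
    rw [hmid, hL _ _ hε hvw, hL _ _ (by positivity) hv, hL _ _ (by positivity) hw] at h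
    refine smul_right_injective E hε.ne' ?_
    linear_combination (norm := module) h
  have map_smul_of_pos : ∀ c : ℝ, 0 < c → ∀ v, L (c • v) = c • L v := by
    intro c hc v
    obtain ⟨ε, hε : 0 < ε, hv⟩ :=
      (eventually_mem_nhdsWithin.and (eventually_add_smul_mem hK v)).exists
    have h := hL (c • v) (ε / c) (div_pos hε hc) (by rwa [smul_smul, div_mul_cancel₀ ε hc.ne'])
    rw [smul_smul, div_mul_cancel₀ ε hc.ne', hL v ε hε hv, add_right_inj] at h
    refine smul_right_injective E (div_pos hε hc).ne' ?_
    beta_reduce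
    rw [← h, smul_smul, div_mul_cancel₀ ε hc.ne']
  have map_neg : ∀ v, L (-v) = -L v := fun v =>
    eq_neg_of_add_eq_zero_left (by rw [← map_add, neg_add_cancel, map_zero])
  refine ⟨map_add, fun c v => ?_⟩
  rcases lt_trichotomy c 0 with hc | rfl | hc
  · rw [← neg_smul_neg, map_smul_of_pos _ (neg_pos.2 hc), map_neg, neg_smul_neg]
  · rw [zero_smul, zero_smul, map_zero]
  · exact map_smul_of_pos c hc v

theorem IsAffineOn.exists_affineMap_eqOn (hT : IsAffineOn T K) (hK : K ∈ 𝓝 q) :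
    ∃ A : E →ᵃ[ℝ] E, EqOn T A K := by
  obtain ⟨L, hL⟩ := hT.exists_add_smul_eq hK
  have hlin := hT.isLinearMap_of_add_smul_eq hK hL
  refine ⟨(hlin.mk' L).toAffineMap + AffineMap.const ℝ E (T q - L q), fun y hy => ?_⟩
  have h := hL (y - q) 1 one_pos (by simpa using hy)
  simp only [one_smul, add_sub_cancel, hlin.map_sub] at h
  simp only [h, AffineMap.coe_add, LinearMap.coe_toAffineMap, AffineMap.coe_const, Pi.add_apply,
    IsLinearMap.mk'_apply, const_apply]
  abel

end AffineExtension

theorem IsAffineHomeoOf.image_eq {V : Type*} [AddCommGroup V] [Module ℝ V] [TopologicalSpace V]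
    {T : V → V} {K : Set V} (hT : IsAffineHomeoOf T K) : T '' K = K := by
  obtain ⟨hmaps, -, -, S, hS, -, -, hTS⟩ := hT
  exact hmaps.image_subset.antisymm fun p hp => ⟨S p, hS hp, hTS p hp⟩

theorem image_invFun_comp_preimage {α β : Type*} [Nonempty α] {g : α → β} (hg : Injective g)
    {K : Set β} (hK : K ⊆ range g) {T : β → β} (hT : T '' K = K) :
    (invFun g ∘ T ∘ g) '' (g ⁻¹' K) = g ⁻¹' K := by
  refine image_injective.2 hg ?_
  rw [image_comp, image_comp, image_preimage_eq_of_subset hK, hT, image_image]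
  exact EqOn.image_eq_self fun b hb => invFun_eq (hK hb)

theorem AffineMap.map_smul_add_one_sub_smul {E F : Type*} [AddCommGroup E] [Module ℝ E]
    [AddCommGroup F] [Module ℝ F] (g : E →ᵃ[ℝ] F) (x y : E) (t : ℝ) :
    g (t • x + (1 - t) • y) = t • g x + (1 - t) • g y := by
  simpa [AffineMap.lineMap_apply_module, add_comm] using g.apply_lineMap y x t

theorem IsAffineOn.invFun_comp {E V : Type*} [AddCommGroup E] [Module ℝ E] [AddCommGroup V]
    [Module ℝ V] {g : E →ᵃ[ℝ] V} (hg : Injective g) {K : Set V} (hK : K ⊆ range g) {T : V → V}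
    (hT : IsAffineOn T K) (hTK : MapsTo T K K) : IsAffineOn (invFun g ∘ T ∘ g) (g ⁻¹' K) := by
  intro x hx y hy t ht0 ht1
  have hinv : ∀ z ∈ g ⁻¹' K, g (invFun g (T (g z))) = T (g z) := fun z hz =>
    invFun_eq (hK (hTK hz))
  have hcomb : T (g (t • x + (1 - t) • y)) =
      g (t • invFun g (T (g x)) + (1 - t) • invFun g (T (g y))) := by
    rw [g.map_smul_add_one_sub_smul, hT _ hx _ hy t ht0 ht1, g.map_smul_add_one_sub_smul,
      hinv x hx, hinv y hy]
  simp only [comp_apply, hcomb, leftInverse_invFun hg _]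

theorem affineSpan_preimage_eq_top {E V : Type*} [AddCommGroup E] [Module ℝ E] [AddCommGroup V]
    [Module ℝ V] {g : E →ᵃ[ℝ] V} (hg : Injective g) {K : Set V} (hrange : range g = affineSpan ℝ K) :
    affineSpan ℝ (g ⁻¹' K) = ⊤ := by
  have hK : K ⊆ range g := hrange ▸ subset_affineSpan ℝ K
  rw [← AffineSubspace.comap_map_eq_of_injective hg (affineSpan ℝ (g ⁻¹' K)),
    AffineSubspace.map_span, image_preimage_eq_of_subset hK, eq_top_iff]
  intro x _
  rw [AffineSubspace.mem_comap, ← SetLike.mem_coe, ← hrange]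
  exact mem_range_self x

theorem AffineSubspace.exists_isEmbedding_affineMap_range_eq {V : Type*} [AddCommGroup V]
    [Module ℝ V] [TopologicalSpace V] [IsTopologicalAddGroup V] [ContinuousSMul ℝ V] [T2Space V]
    (P : AffineSubspace ℝ V) [FiniteDimensional ℝ P.direction] {q : V} (hq : q ∈ P) :
    ∃ n, ∃ g : (Fin n → ℝ) →ᵃ[ℝ] V, IsEmbedding g ∧ range g = P := by
  let e := (Module.finBasis ℝ P.direction).equivFun.toContinuousLinearEquiv
  refine ⟨_, (P.direction.subtype ∘ₗ e.symm.toLinearMap).toAffineMap + AffineMap.const ℝ _ q,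
    ?_, ?_⟩
  · exact (Homeomorph.addRight q).isEmbedding.comp
      (IsEmbedding.subtypeVal.comp e.symm.toHomeomorph.isEmbedding)
  · ext x
    simp only [AffineMap.coe_add, LinearMap.coe_toAffineMap, AffineMap.coe_const, Pi.add_apply,
      LinearMap.coe_comp, comp_apply, Submodule.subtype_apply, const_apply, mem_range,
      SetLike.mem_coe]
    constructor
    · rintro ⟨y, rfl⟩
      exact AffineSubspace.vadd_mem_of_mem_direction (e.symm y).2 hq
    · intro hx
      exact ⟨e ⟨x - q, AffineSubspace.vsub_mem_direction hx hq⟩, by simp⟩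

section Centroid

variable {E : Type*} [NormedAddCommGroup E] [NormedSpace ℝ E] [FiniteDimensional ℝ E]
  [MeasurableSpace E]

theorem AffineMap.map_setAverage (f : E →ᵃ[ℝ] E) {μ : Measure E} {s : Set E} (h0 : μ s ≠ 0)
    (htop : μ s ≠ ⊤) (hint : IntegrableOn (fun x => x) s μ) :
    f (⨍ x in s, x ∂μ) = ⨍ x in s, f x ∂μ := by
  have hpos : μ.real s ≠ 0 := ENNReal.toReal_ne_zero.2 ⟨h0, htop⟩
  let L := LinearMap.toContinuousLinearMap f.linear
  have hf : ⇑f = fun x => L x + f 0 := f.decomp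
  have hint_L : IntegrableOn (fun x => L x) s μ := L.integrable_comp hint
  rw [hf]
  beta_reduce
  rw [setAverage_eq, setAverage_eq, integral_add hint_L (integrableOn_const htop),
    setIntegral_const, L.integral_comp_comm hint, map_smul, smul_add, smul_smul,
    inv_mul_cancel₀ hpos, one_smul]

variable [BorelSpace E] (μ : Measure E) [μ.IsAddHaarMeasure]

theorem addHaar_image_affineMap (f : E →ᵃ[ℝ] E) (s : Set E) :
    μ (f '' s) = ENNReal.ofReal |LinearMap.det f.linear| * μ s := by
  have : f '' s = (· + f 0) '' (f.linear '' s) := by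
    rw [image_image]
    exact image_congr fun x _ => congrFun f.decomp x
  rw [this, image_add_right, measure_preimage_add_right, Measure.addHaar_image_linearMap]

variable {μ}

theorem abs_det_linear_eq_one_of_image_eq {f : E →ᵃ[ℝ] E} {s : Set E} (h0 : μ s ≠ 0)
    (htop : μ s ≠ ⊤) (hf : f '' s = s) : |LinearMap.det f.linear| = 1 := by
  have h := addHaar_image_affineMap μ f s
  rwa [hf, eq_comm, ENNReal.mul_eq_right h0 htop, ENNReal.ofReal_eq_one] at h

theorem setIntegral_comp_affineMap_of_image_eq {F : Type*} [NormedAddCommGroup F]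
    [NormedSpace ℝ F] {f : E →ᵃ[ℝ] E} {s : Set E} (hs : MeasurableSet s) (h0 : μ s ≠ 0)
    (htop : μ s ≠ ⊤) (hf : f '' s = s) (g : E → F) :
    ∫ x in s, g (f x) ∂μ = ∫ x in s, g x ∂μ := by
  have hdet := abs_det_linear_eq_one_of_image_eq h0 htop hf
  let L := LinearMap.toContinuousLinearMap f.linear
  have hderiv : ∀ x ∈ s, HasFDerivWithinAt f L s x := fun x _ => by
    rw [f.decomp]
    exact L.hasFDerivWithinAt.add_const (f 0)
  have hinj : Injective f := by
    have hdet0 : LinearMap.det f.linear ≠ 0 := fun h => by simp [h] at hdet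
    exact f.linear_injective_iff.1 (f.linear.equivOfDetNeZero hdet0).injective
  have := integral_image_eq_integral_abs_det_fderiv_smul μ hs hderiv hinj.injOn g
  rw [hf] at this
  simpa [L, ContinuousLinearMap.det, hdet] using this.symm

theorem AffineMap.isFixedPt_setAverage_of_image_eq {f : E →ᵃ[ℝ] E} {K : Set E}
    (hK : IsCompact K) (h0 : μ K ≠ 0) (hf : f '' K = K) : IsFixedPt f (⨍ x in K, x ∂μ) := by
  have htop := (hK.measure_lt_top (μ := μ)).ne
  rw [IsFixedPt, f.map_setAverage h0 htop (continuous_id.continuousOn.integrableOn_compact hK),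
    setAverage_eq, setAverage_eq,
    setIntegral_comp_affineMap_of_image_eq hK.measurableSet h0 htop hf (fun x => x)]

end Centroid

theorem common_fixed_point_of_affine_homeos_of_finiteDimensional_general
    {V : Type*} [AddCommGroup V] [Module ℝ V] [TopologicalSpace V]
    [IsTopologicalAddGroup V] [ContinuousSMul ℝ V] [T2Space V]
    (K : Set V) (hne : K.Nonempty) (hcomp : IsCompact K) (hconv : Convex ℝ K)
    (hfd : FiniteDimensional ℝ (affineSpan ℝ K).direction) :
    ∃ p ∈ K, ∀ T : V → V, IsAffineHomeoOf T K → T p = p := by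
  obtain ⟨q₀, hq₀⟩ := hne
  obtain ⟨n, g, hg, hrange⟩ :=
    (affineSpan ℝ K).exists_isEmbedding_affineMap_range_eq (subset_affineSpan ℝ K hq₀)
  have hKg : K ⊆ range g := hrange ▸ subset_affineSpan ℝ K
  set K' := g ⁻¹' K
  have hK'comp : IsCompact K' := hg.isInducing.isCompact_preimage' hcomp hKg
  have hK'conv : Convex ℝ K' := hconv.affine_preimage g
  obtain ⟨q, hq⟩ : (interior K').Nonempty := hK'conv.interior_nonempty_iff_affineSpan_eq_top.2
    (affineSpan_preimage_eq_top hg.injective hrange)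
  have hvol : volume K' ≠ 0 := (Measure.measure_pos_of_nonempty_interior _ ⟨q, hq⟩).ne'
  set c := ⨍ x in K', x
  have hc : c ∈ K' := hK'conv.set_average_mem hK'comp.isClosed hvol
    hK'comp.measure_lt_top.ne (ae_restrict_mem hK'comp.measurableSet)
    (continuous_id.continuousOn.integrableOn_compact hK'comp)
  refine ⟨g c, hc, fun T hT => ?_⟩
  have hTK := hT.image_eq
  obtain ⟨hmaps, -, haff, -⟩ := hT
  obtain ⟨A, hA⟩ := (haff.invFun_comp hg.injective hKg hmaps).exists_affineMap_eqOn
    (mem_interior_iff_mem_nhds.1 hq)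
  have hAK : A '' K' = K' := by
    rw [← hA.image_eq]
    exact image_invFun_comp_preimage hg.injective hKg hTK
  calc T (g c) = g (invFun g (T (g c))) := (invFun_eq (hKg (hmaps hc))).symm
    _ = g (A c) := congrArg g (hA hc)
    _ = g c := by rw [A.isFixedPt_setAverage_of_image_eq hK'comp hvol hAK]

/-- If `K` is a nonempty compact convex subset of a Hausdorff locally convex real
topological vector space whose affine span is finite-dimensional, then the group of all
affine homeomorphisms of `K` onto `K` has a common fixed point. -/
theorem common_fixed_point_of_affine_homeos_of_finiteDimensional
    {V : Type*} [AddCommGroup V] [Module ℝ V] [TopologicalSpace V]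
    [IsTopologicalAddGroup V] [ContinuousSMul ℝ V] [T2Space V] [LocallyConvexSpace ℝ V]
    (K : Set V) (hne : K.Nonempty) (hcomp : IsCompact K) (hconv : Convex ℝ K)
    (hfd : FiniteDimensional ℝ (affineSpan ℝ K).direction) :
    ∃ p ∈ K, ∀ T : V → V, IsAffineHomeoOf T K → T p = p :=
  common_fixed_point_of_affine_homeos_of_finiteDimensional_general K hne hcomp hconv hfd
end

section
/- Let V be a Hausdorff locally convex real topological vector space, K ⊆ V a nonempty compact convex set, and S₁, …, Sₙ reflections of K. Let E be the affine span of the union K_{S₁} ∪ … ∪ K_{Sₙ} of their fixed point sets, and set K₀ = E ∩ K. Then Sᵢ(K₀) ⊆ K₀ for each i = 1, …, n. -/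
/-- `T` is a reflection of `K`: a continuous affine self-map of `K` with `T ∘ T = id`
on `K` (hence an affine homeomorphism of `K` onto `K`, its own inverse). -/
def IsReflection {V : Type*} [AddCommGroup V] [Module ℝ V] [TopologicalSpace V]
    (T : V → V) (K : Set V) : Prop :=
  Set.MapsTo T K K ∧ ContinuousOn T K ∧ IsAffineOn T K ∧ ∀ p ∈ K, T (T p) = p

/-!
If `x ∈ K`, the midpoint `m` of `x` and `S x` lies in `K` and is fixed by `S`, since `S` is
affine and swaps `x` and `S x`. So `m` lies in the affine span `E` of the fixed point sets, and
`S x`, the reflection of `x` through `m`, lies in `E` whenever `x` does.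
-/

theorem AffineSubspace.mem_of_midpoint_mem {R V P : Type*} [Ring R] [Invertible (2 : R)]
    [AddCommGroup V] [Module R V] [AddTorsor V P] {E : AffineSubspace R P} {x y : P}
    (hx : x ∈ E) (hm : midpoint R x y ∈ E) : y ∈ E := by
  rw [← AffineEquiv.pointReflection_midpoint_left (R := R) x y, AffineEquiv.pointReflection_apply]
  exact E.vadd_mem_of_mem_direction (E.vsub_mem_direction hm hx) hm

section Reflection

variable {V : Type*} [AddCommGroup V] [Module ℝ V] {T : V → V} {K : Set V} {x y : V}

theorem IsAffineOn.map_midpoint (hT : IsAffineOn T K) (hx : x ∈ K) (hy : y ∈ K) :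
    T (midpoint ℝ x y) = midpoint ℝ (T x) (T y) := by
  have h := hT x hx y hy 2⁻¹ (by norm_num) (by norm_num)
  rw [show (1 : ℝ) - 2⁻¹ = 2⁻¹ by norm_num] at h
  simpa only [midpoint_eq_smul_add, invOf_eq_inv, smul_add] using h

theorem IsReflection.map_midpoint_self [TopologicalSpace V] (hT : IsReflection T K)
    (hx : x ∈ K) : T (midpoint ℝ x (T x)) = midpoint ℝ x (T x) := by
  obtain ⟨hmaps, -, haff, hinv⟩ := hT
  rw [haff.map_midpoint hx (hmaps hx), hinv x hx, midpoint_comm]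

theorem IsReflection.midpoint_self_mem_fixedPoints [TopologicalSpace V] (hT : IsReflection T K)
    (hK : Convex ℝ K) (hx : x ∈ K) : midpoint ℝ x (T x) ∈ {p ∈ K | T p = p} :=
  ⟨hK.midpoint_mem hx (hT.1 hx), hT.map_midpoint_self hx⟩

end Reflection

theorem reflections_preserve_affineSpan_of_fixedSets_inter_general
    {V : Type*} [AddCommGroup V] [Module ℝ V] [TopologicalSpace V]
    (K : Set V) (hconv : Convex ℝ K)
    (n : ℕ) (S : Fin n → V → V) (hS : ∀ i, IsReflection (S i) K) :
    ∀ i, Set.MapsTo (S i)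
      ((affineSpan ℝ (⋃ j, {p ∈ K | S j p = p}) : Set V) ∩ K)
      ((affineSpan ℝ (⋃ j, {p ∈ K | S j p = p}) : Set V) ∩ K) := by
  rintro i x ⟨hxE, hxK⟩
  have hmid : midpoint ℝ x (S i x) ∈ affineSpan ℝ (⋃ j, {p ∈ K | S j p = p}) :=
    subset_affineSpan ℝ _ <| Set.mem_iUnion.2 ⟨i, (hS i).midpoint_self_mem_fixedPoints hconv hxK⟩
  exact ⟨AffineSubspace.mem_of_midpoint_mem hxE hmid, (hS i).1 hxK⟩

/-- If `S₁, …, Sₙ` are reflections of a nonempty compact convex set `K`, `E` is the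
affine span of the union of their fixed point sets and `K₀ = E ∩ K`, then each `Sᵢ`
maps `K₀` into `K₀`. -/
theorem reflections_preserve_affineSpan_of_fixedSets_inter
    {V : Type*} [AddCommGroup V] [Module ℝ V] [TopologicalSpace V]
    [IsTopologicalAddGroup V] [ContinuousSMul ℝ V] [T2Space V] [LocallyConvexSpace ℝ V]
    (K : Set V) (hne : K.Nonempty) (hcomp : IsCompact K) (hconv : Convex ℝ K)
    (n : ℕ) (S : Fin n → V → V) (hS : ∀ i, IsReflection (S i) K) :
    ∀ i, Set.MapsTo (S i)
      ((affineSpan ℝ (⋃ j, {p ∈ K | S j p = p}) : Set V) ∩ K)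
      ((affineSpan ℝ (⋃ j, {p ∈ K | S j p = p}) : Set V) ∩ K) :=
  reflections_preserve_affineSpan_of_fixedSets_inter_general K hconv n S hS
end

section
/- Let V be a Hausdorff locally convex real topological vector space, K ⊆ V a nonempty compact convex set, and S₁, …, Sₙ reflections of K such that each fixed point set K_{Sᵢ} = {p ∈ K : Sᵢ(p) = p} has finite-dimensional affine span. Then K_{S₁} ∩ … ∩ K_{Sₙ} ≠ ∅, i.e. S₁, …, Sₙ have a common fixed point. -/
open Set

section Affine

variable {V : Type*} [AddCommGroup V] [Module ℝ V] {K L : Set V} {f g : V → V}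

lemma IsAffineOn.mono (hg : IsAffineOn g K) (hLK : L ⊆ K) : IsAffineOn g L :=
  fun x hx y hy => hg x (hLK hx) y (hLK hy)

lemma IsAffineOn.comp (hf : IsAffineOn f K) (hg : IsAffineOn g K) (hgK : MapsTo g K K) :
    IsAffineOn (f ∘ g) K := fun x hx y hy t ht₀ ht₁ => by
  simp only [Function.comp_apply, hg x hx y hy t ht₀ ht₁, hf _ (hgK hx) _ (hgK hy) t ht₀ ht₁]

lemma IsAffineOn.map_sub_eq_smul (hg : IsAffineOn g K) {a b c d : V} (ha : a ∈ K) (hb : b ∈ K)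
    (hc : c ∈ K) (hd : d ∈ K) {s : ℝ} (hs : 0 ≤ s) (h : a - b = s • (c - d)) :
    g a - g b = s • (g c - g d) := by
  set t : ℝ := (1 + s)⁻¹
  have ht₀ : 0 < t := by positivity
  have ht₁ : t ≤ 1 := inv_le_one_of_one_le₀ (by linarith)
  have hst : 1 - t = t * s := by simp only [t]; field_simp; ring
  have hcomb : t • a + (1 - t) • d = t • b + (1 - t) • c := by
    rw [sub_eq_iff_eq_add.1 h, hst]; module
  have himage := hg a ha d hd t ht₀.le ht₁
  rw [hcomb, hg b hb c hc t ht₀.le ht₁, hst] at himage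
  refine smul_right_injective V ht₀.ne' ?_
  rw [← sub_eq_zero, ← sub_eq_zero.2 himage.symm]
  module

lemma IsAffineOn.mapsTo_inter_of_fixedPoints_subset (hK : Convex ℝ K) (hmaps : MapsTo g K K)
    (haff : IsAffineOn g K) (hinv : LeftInvOn g g K) {A : AffineSubspace ℝ V}
    (hA : {p ∈ K | g p = p} ⊆ A) : MapsTo g (K ∩ A) (K ∩ A) := by
  rintro x ⟨hxK, hxA⟩
  set m := (1 / 2 : ℝ) • x + (1 - 1 / 2 : ℝ) • g x
  have hm : m ∈ A := by
    refine hA ⟨hK hxK (hmaps hxK) (by norm_num) (by norm_num) (by norm_num), ?_⟩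
    rw [haff x hxK (g x) (hmaps hxK) _ (by norm_num) (by norm_num), hinv hxK]
    module
  -- `g x` is the reflection of `x` in the fixed point `m`
  have hgx : g x = AffineMap.lineMap x m (2 : ℝ) := by
    rw [AffineMap.lineMap_apply, vsub_eq_sub, vadd_eq_add]
    module
  exact ⟨hmaps hxK, hgx ▸ AffineMap.lineMap_mem _ hxA hm⟩

lemma exists_affineSubspace_mapsTo_inter {ι : Type*} [Finite ι] (hne : K.Nonempty)
    (hK : Convex ℝ K) {S : ι → V → V} (hmaps : ∀ i, MapsTo (S i) K K)
    (haff : ∀ i, IsAffineOn (S i) K) (hinv : ∀ i, LeftInvOn (S i) (S i) K)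
    (hfd : ∀ i, FiniteDimensional ℝ (affineSpan ℝ {p ∈ K | S i p = p}).direction) :
    ∃ A : AffineSubspace ℝ V, FiniteDimensional ℝ A.direction ∧ (K ∩ A).Nonempty ∧
      ∀ i, MapsTo (S i) (K ∩ A) (K ∩ A) := by
  obtain ⟨o, ho⟩ := hne
  have (i : ι) : FiniteDimensional ℝ (vectorSpan ℝ {p ∈ K | S i p = p}) := by
    rw [← direction_affineSpan]; exact hfd i
  refine ⟨AffineSubspace.mk' o (⨆ i, vectorSpan ℝ (insert o {p ∈ K | S i p = p})), ?_,
    ⟨o, ho, AffineSubspace.self_mem_mk' _ _⟩, fun i => ?_⟩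
  · rw [AffineSubspace.direction_mk']; infer_instance
  · refine (haff i).mapsTo_inter_of_fixedPoints_subset hK (hmaps i) (hinv i) fun p hp => ?_
    exact AffineSubspace.mem_mk'.2 <| Submodule.mem_iSup_of_mem i <|
      vsub_mem_vectorSpan ℝ (mem_insert_of_mem _ hp) (mem_insert o _)

end Affine

lemma exists_leftInvOn_of_mem_closure_range {α ι : Type*} {C : Set α} {T : ι → α → α}
    (hmaps : ∀ i, MapsTo (T i) C C) (hinv : ∀ i, LeftInvOn (T i) (T i) C) {g : Function.End α}
    (hg : g ∈ Submonoid.closure (range T : Set (Function.End α))) :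
    ∃ h ∈ Submonoid.closure (range T : Set (Function.End α)), LeftInvOn h g C := by
  suffices MapsTo g C C ∧ ∃ h ∈ Submonoid.closure (range T : Set (Function.End α)),
      LeftInvOn h g C from this.2
  induction hg using Submonoid.closure_induction with
  | mem _ hg =>
    obtain ⟨i, rfl⟩ := hg
    exact ⟨hmaps i, T i, Submonoid.subset_closure ⟨i, rfl⟩, hinv i⟩
  | one => exact ⟨mapsTo_id C, 1, one_mem _, fun _ _ => rfl⟩
  | mul f g _ _ ihf ihg =>
    obtain ⟨hf, f', hf', hff'⟩ := ihf
    obtain ⟨hg, g', hg', hgg'⟩ := ihg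
    exact ⟨hf.comp hg, g' * f', mul_mem hg' hf', hgg'.comp hff' hg⟩

def affineSelfMapsOn {E : Type*} [AddCommGroup E] [Module ℝ E] (C : Set E) :
    Submonoid (Function.End E) where
  carrier := {g | MapsTo g C C ∧ IsAffineOn g C}
  mul_mem' hf hg := ⟨hf.1.comp hg.1, hf.2.comp hg.2 hg.1⟩
  one_mem' := ⟨mapsTo_id C, fun _ _ _ _ _ _ _ => rfl⟩

lemma closure_range_le_affineSelfMapsOn {E ι : Type*} [AddCommGroup E] [Module ℝ E] {C : Set E}
    {T : ι → E → E} (hmaps : ∀ i, MapsTo (T i) C C) (haff : ∀ i, IsAffineOn (T i) C) :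
    Submonoid.closure (range T : Set (Function.End E)) ≤ affineSelfMapsOn C :=
  Submonoid.closure_le.2 <| range_subset_iff.2 fun i => ⟨hmaps i, haff i⟩

section Normed

variable {E : Type*} [NormedAddCommGroup E] [NormedSpace ℝ E] {C : Set E}

lemma Convex.exists_add_mem_of_mem_vectorSpan [FiniteDimensional ℝ E] (hC : Convex ℝ C)
    (hne : C.Nonempty) : ∃ z ∈ C, ∃ r > 0, ∀ v ∈ vectorSpan ℝ C, ‖v‖ ≤ r → z + v ∈ C := by
  obtain ⟨_, ⟨z, hz, rfl⟩⟩ := hne.intrinsicInterior hC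
  have hzC : (z : E) ∈ C := intrinsicInterior_subset ⟨z, hz, rfl⟩
  rw [mem_interior_iff_mem_nhds, Metric.mem_nhds_iff] at hz
  obtain ⟨ε, hε, hball⟩ := hz
  refine ⟨z, hzC, ε / 2, by positivity, fun v hv hvr => ?_⟩
  have hzv : (z : E) + v ∈ affineSpan ℝ C := by
    simpa [add_comm] using
      AffineSubspace.vadd_mem_of_mem_direction (by rwa [direction_affineSpan]) z.2
  refine hball (a := ⟨_, hzv⟩) ?_
  rw [Metric.mem_ball, Subtype.dist_eq, dist_eq_norm]
  simpa using hvr.trans_lt (half_lt_self hε)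

lemma IsAffineOn.norm_sub_le {g : E → E} (hg : IsAffineOn g C) {z : E} {r D : ℝ} (hr : 0 < r)
    (hz : ∀ v ∈ vectorSpan ℝ C, ‖v‖ ≤ r → z + v ∈ C)
    (hD : ∀ p ∈ C, ∀ q ∈ C, ‖g p - g q‖ ≤ D) {a b : E} (ha : a ∈ C) (hb : b ∈ C) :
    ‖g a - g b‖ ≤ D / (2 * r) * ‖a - b‖ := by
  rcases eq_or_ne a b with rfl | hab
  · simp
  set s := ‖a - b‖
  have hs : 0 < s := norm_pos_iff.2 (sub_ne_zero.2 hab)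
  -- `a - b` is parallel to the diameter from `z - w` to `z + w` of the ball around `z`
  set w := (r / s) • (a - b)
  have hw : w ∈ vectorSpan ℝ C := Submodule.smul_mem _ _ (vsub_mem_vectorSpan ℝ ha hb)
  have hwr : ‖w‖ = r := by
    rw [norm_smul, Real.norm_of_nonneg (by positivity), div_mul_cancel₀ _ hs.ne']
  have hp := hz w hw hwr.le
  have hq := hz (-w) (neg_mem hw) (by rw [norm_neg, hwr])
  have hdiff : a - b = (s / (2 * r)) • (z + w - (z + -w)) := by
    have hscale : s / (2 * r) * 2 * (r / s) = 1 := by field_simp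
    rw [show z + w - (z + -w) = (2 : ℝ) • w by module, smul_smul, smul_smul, hscale, one_smul]
  rw [hg.map_sub_eq_smul ha hb hp hq (by positivity) hdiff, norm_smul,
    Real.norm_of_nonneg (by positivity)]
  calc s / (2 * r) * ‖g (z + w) - g (z + -w)‖ ≤ s / (2 * r) * D := by gcongr; exact hD _ hp _ hq
    _ = D / (2 * r) * s := by ring

lemma exists_forall_mem_closure_range_norm_sub_le [FiniteDimensional ℝ E] {ι : Type*}
    (hne : C.Nonempty) (hbdd : Bornology.IsBounded C) (hconv : Convex ℝ C) {T : ι → E → E}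
    (hmaps : ∀ i, MapsTo (T i) C C) (haff : ∀ i, IsAffineOn (T i) C) :
    ∃ M > 0, ∀ g ∈ Submonoid.closure (range T : Set (Function.End E)),
      ∀ a ∈ C, ∀ b ∈ C, ‖g a - g b‖ ≤ M * ‖a - b‖ := by
  obtain ⟨z, -, r, hr, hz⟩ := hconv.exists_add_mem_of_mem_vectorSpan hne
  refine ⟨Metric.diam C / (2 * r) + 1, by positivity, fun g hg a ha b hb => ?_⟩
  obtain ⟨hgC, hgaff⟩ := closure_range_le_affineSelfMapsOn hmaps haff hg
  have hD (p) (hp : p ∈ C) (q) (hq : q ∈ C) : ‖g p - g q‖ ≤ Metric.diam C := by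
    simpa only [dist_eq_norm] using Metric.dist_le_diam_of_mem hbdd (hgC hp) (hgC hq)
  exact (hgaff.norm_sub_le hr hz hD ha hb).trans (by gcongr; linarith)

end Normed

section InnerProduct

variable {E : Type*} [NormedAddCommGroup E] [InnerProductSpace ℝ E] {C : Set E}

lemma strongConvexOn_univ_norm_sq : StrongConvexOn univ 2 fun x : E => ‖x‖ ^ 2 := by
  rw [strongConvexOn_iff_convex]
  simpa using convexOn_const (0 : ℝ) (convex_univ : Convex ℝ (univ : Set E))

lemma strongConvexOn_iSup_norm_sq {κ : Type*} [Nonempty κ] {g : κ → E → E} (hC : Convex ℝ C)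
    (haff : ∀ k, IsAffineOn (g k) C) (hbdd : ∀ x ∈ C, BddAbove (range fun k => ‖g k x‖ ^ 2))
    {m : ℝ} (hm : ∀ k, ∀ x ∈ C, ∀ y ∈ C, m * ‖x - y‖ ≤ ‖g k x - g k y‖) (hm₀ : 0 ≤ m) :
    StrongConvexOn C (2 * m ^ 2) fun x => ⨆ k, ‖g k x‖ ^ 2 := by
  refine ⟨hC, fun x hx y hy a b ha hb hab => ciSup_le fun k => ?_⟩
  obtain rfl : b = 1 - a := eq_sub_of_add_eq' hab
  calc ‖g k (a • x + (1 - a) • y)‖ ^ 2 = ‖a • g k x + (1 - a) • g k y‖ ^ 2 := by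
        rw [haff k x hx y hy a ha (by linarith)]
    _ ≤ a * ‖g k x‖ ^ 2 + (1 - a) * ‖g k y‖ ^ 2 - a * (1 - a) * ‖g k x - g k y‖ ^ 2 := by
        simpa using strongConvexOn_univ_norm_sq.2 (mem_univ (g k x)) (mem_univ (g k y)) ha hb hab
    _ ≤ a • (⨆ k, ‖g k x‖ ^ 2) + (1 - a) • (⨆ k, ‖g k y‖ ^ 2)
          - a * (1 - a) * (2 * m ^ 2 / 2 * ‖x - y‖ ^ 2) := by
        have hxk := le_ciSup (hbdd x hx) k
        have hyk := le_ciSup (hbdd y hy) k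
        have hxy : (m * ‖x - y‖) ^ 2 ≤ ‖g k x - g k y‖ ^ 2 := by gcongr; exact hm k x hx y hy
        simp only [smul_eq_mul]
        nlinarith [mul_nonneg ha hb]

theorem exists_common_fixed_point_of_isAffineOn_involutions [FiniteDimensional ℝ E]
    {ι : Type*} (hne : C.Nonempty) (hcomp : IsCompact C) (hconv : Convex ℝ C) (T : ι → E → E)
    (hmaps : ∀ i, MapsTo (T i) C C) (haff : ∀ i, IsAffineOn (T i) C)
    (hinv : ∀ i, LeftInvOn (T i) (T i) C) :
    ∃ p ∈ C, ∀ i, T i p = p := by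
  set G := Submonoid.closure (range T : Set (Function.End E))
  have hG (g : G) : MapsTo (g : Function.End E) C C ∧ IsAffineOn (g : Function.End E) C :=
    closure_range_le_affineSelfMapsOn hmaps haff g.2
  obtain ⟨M, hM, hlip⟩ :=
    exists_forall_mem_closure_range_norm_sub_le hne hcomp.isBounded hconv hmaps haff
  have hexpand (g : G) (a) (ha : a ∈ C) (b) (hb : b ∈ C) :
      M⁻¹ * ‖a - b‖ ≤ ‖(g : Function.End E) a - (g : Function.End E) b‖ := by
    obtain ⟨h, hh, hgh⟩ := exists_leftInvOn_of_mem_closure_range hmaps hinv g.2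
    rw [inv_mul_le_iff₀ hM]
    simpa only [hgh ha, hgh hb] using hlip h hh _ ((hG g).1 ha) _ ((hG g).1 hb)
  obtain ⟨R, hR⟩ := hcomp.isBounded.exists_norm_le
  have hbdd : ∀ x ∈ C, BddAbove (range fun g : G => ‖(g : Function.End E) x‖ ^ 2) :=
    fun x hx => ⟨R ^ 2, by
      rintro _ ⟨g, rfl⟩
      exact pow_le_pow_left₀ (norm_nonneg _) (hR _ ((hG g).1 hx)) 2⟩
  set Q : E → ℝ := fun x => ⨆ g : G, ‖(g : Function.End E) x‖ ^ 2
  have hQ : StrictConvexOn ℝ C Q :=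
    (strongConvexOn_iSup_norm_sq hconv (fun g : G => (hG g).2) hbdd hexpand
      (inv_nonneg.2 hM.le)).strictConvexOn (by positivity)
  have hQlsc : LowerSemicontinuousOn Q C := lowerSemicontinuousOn_ciSup hbdd fun g : G =>
    ((LipschitzOnWith.of_dist_le' (K := M) fun a ha b hb => by
      simpa only [dist_eq_norm] using hlip g g.2 a ha b hb).continuousOn.norm.pow 2
      ).lowerSemicontinuousOn
  obtain ⟨p, hp, hmin⟩ := hQlsc.exists_isMinOn hne hcomp
  -- `Q (T i p) ≤ Q p`, so `T i p` is another minimizer of `Q`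
  refine ⟨p, hp, fun i => hQ.eq_of_isMinOn (fun y hy => ?_) hmin (hmaps i hp) hp⟩
  refine le_trans (ciSup_le fun g => ?_) (isMinOn_iff.1 hmin y hy)
  exact le_ciSup (f := fun g : G => ‖(g : Function.End E) p‖ ^ 2) (hbdd p hp)
    ⟨g * show Function.End E from T i, mul_mem g.2 (Submonoid.subset_closure ⟨i, rfl⟩)⟩

end InnerProduct

section Transport

variable {α β : Type*} [Nonempty α] {f : α → β} {K : Set α} {T : α → α}

lemma comp_invFunOn_apply (hf : InjOn f K) {x : α} (hx : x ∈ K) :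
    (f ∘ T ∘ Function.invFunOn f K) (f x) = f (T x) := by
  simp only [Function.comp_apply, hf.leftInvOn_invFunOn hx]

lemma mapsTo_comp_invFunOn (hf : InjOn f K) (hT : MapsTo T K K) :
    MapsTo (f ∘ T ∘ Function.invFunOn f K) (f '' K) (f '' K) := by
  rintro _ ⟨x, hx, rfl⟩
  rw [comp_invFunOn_apply hf hx]
  exact mem_image_of_mem f (hT hx)

lemma leftInvOn_comp_invFunOn (hf : InjOn f K) (hT : MapsTo T K K) (hinv : LeftInvOn T T K) :
    LeftInvOn (f ∘ T ∘ Function.invFunOn f K) (f ∘ T ∘ Function.invFunOn f K) (f '' K) := by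
  rintro _ ⟨x, hx, rfl⟩
  rw [comp_invFunOn_apply hf hx, comp_invFunOn_apply hf (hT hx), hinv hx]

lemma isAffineOn_comp_invFunOn {V E F : Type*} [AddCommGroup V] [Module ℝ V] [AddCommGroup E]
    [Module ℝ E] [FunLike F V E] [LinearMapClass F ℝ V E] {f : F} {K : Set V} {T : V → V}
    (hK : Convex ℝ K) (hf : InjOn f K) (hT : IsAffineOn T K) :
    IsAffineOn (f ∘ T ∘ Function.invFunOn f K) (f '' K) := by
  rintro _ ⟨x, hx, rfl⟩ _ ⟨y, hy, rfl⟩ t ht₀ ht₁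
  have hxy : t • x + (1 - t) • y ∈ K := hK hx hy ht₀ (by linarith) (by ring)
  rw [← map_smul, ← map_smul, ← map_add, comp_invFunOn_apply hf hxy, comp_invFunOn_apply hf hx,
    comp_invFunOn_apply hf hy, hT x hx y hy t ht₀ ht₁, map_add, map_smul, map_smul]

end Transport

lemma exists_continuousLinearMap_injOn {V : Type*} [AddCommGroup V] [Module ℝ V]
    [TopologicalSpace V] [IsTopologicalAddGroup V] [ContinuousSMul ℝ V] [T2Space V]
    [LocallyConvexSpace ℝ V] (A : AffineSubspace ℝ V) [FiniteDimensional ℝ A.direction] :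
    ∃ Λ : V →L[ℝ] EuclideanSpace ℝ (Fin (Module.finrank ℝ A.direction)), InjOn Λ A := by
  let e := (Module.finBasis ℝ A.direction).equivFunL.trans (EuclideanSpace.equiv _ ℝ).symm
  obtain ⟨Λ, hΛ⟩ := e.toContinuousLinearMap.exist_extension_of_finiteDimensional_range
  refine ⟨Λ, fun x hx y hy hxy => ?_⟩
  have hmem := AffineSubspace.vsub_mem_direction hx hy
  have h0 : e ⟨x -ᵥ y, hmem⟩ = 0 := by
    simpa [hxy] using congr($hΛ ⟨x -ᵥ y, hmem⟩)
  simpa [sub_eq_zero] using congrArg Subtype.val (e.map_eq_zero_iff.1 h0)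

/-- Finitely many reflections of a nonempty compact convex set `K`, each of whose fixed
point sets has finite-dimensional affine span, have a common fixed point. -/
theorem finitely_many_reflections_common_fixed_point
    {V : Type*} [AddCommGroup V] [Module ℝ V] [TopologicalSpace V]
    [IsTopologicalAddGroup V] [ContinuousSMul ℝ V] [T2Space V] [LocallyConvexSpace ℝ V]
    (K : Set V) (hne : K.Nonempty) (hcomp : IsCompact K) (hconv : Convex ℝ K)
    (n : ℕ) (S : Fin n → V → V) (hS : ∀ i, IsReflection (S i) K)
    (hfd : ∀ i, FiniteDimensional ℝ (affineSpan ℝ {p ∈ K | S i p = p}).direction) :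
    ∃ p ∈ K, ∀ i, S i p = p := by
  have hmaps (i) : MapsTo (S i) K K := (hS i).1
  have haff (i) : IsAffineOn (S i) K := (hS i).2.2.1
  have hinv (i) : LeftInvOn (S i) (S i) K := (hS i).2.2.2
  obtain ⟨A, hAfd, ⟨o, ho⟩, hSA⟩ := exists_affineSubspace_mapsTo_inter hne hconv hmaps haff hinv hfd
  have hA : IsClosed (A : Set V) :=
    A.isClosed_direction_iff.1 (Submodule.closed_of_finiteDimensional _)
  have hKA : Convex ℝ (K ∩ A) := hconv.inter A.convex
  obtain ⟨Λ, hΛ⟩ := exists_continuousLinearMap_injOn A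
  have hΛK : InjOn Λ (K ∩ A) := hΛ.mono inter_subset_right
  obtain ⟨_, ⟨x, hx, rfl⟩, hfix⟩ := exists_common_fixed_point_of_isAffineOn_involutions
    (C := Λ '' (K ∩ A)) ⟨Λ o, o, ho, rfl⟩ ((hcomp.inter_right hA).image Λ.continuous)
    (hKA.linear_image Λ.toLinearMap) (fun i => Λ ∘ S i ∘ Function.invFunOn Λ (K ∩ A))
    (fun i => mapsTo_comp_invFunOn hΛK (hSA i))
    (fun i => isAffineOn_comp_invFunOn hKA hΛK ((haff i).mono inter_subset_left))
    (fun i => leftInvOn_comp_invFunOn hΛK (hSA i) ((hinv i).mono inter_subset_left))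
  exact ⟨x, hx.1, fun i => hΛK (hSA i hx) hx (by simpa [hΛK.leftInvOn_invFunOn hx] using hfix i)⟩
end
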